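/- Let (P, μ) be a measure space, and let x : ℝ → P → ℝ be a parameterized family of real-valued functions, with partition function Z(θ) = ∫ exp(x(θ, p)) dμ(p) and normalized log-likelihood L(θ, p*) = x(θ, p*) − log Z(θ) at a fixed point p* ∈ P. Suppose there is a parameter value θ₀ and a radius ε > 0 such that: (i) for each θ in the ball of radius ε around θ₀, the function p ↦ exp(x(θ, p)) is μ-integrable; (ii) for μ-almost every p, the map θ ↦ x(θ, p) is differentiable at every θ in that ball with derivative ∂x/∂θ(θ, p); (iii) there is a μ-integrable function g : P → ℝ with |∂x/∂θ(θ, p) · exp(x(θ, p))| ≤ g(p) for all θ in the ball and μ-almost every p; (iv) the map p ↦ ∂x/∂θ(θ₀, p) · exp(x(θ₀, p)) is μ-measurable; (v) Z(θ₀) > 0; and (vi) the map θ ↦ x(θ, p*) is differentiable at θ₀. Then θ ↦ L(θ, p*) is differentiable at θ₀ with derivative ∂x/∂θ(θ₀, p*) − ∫ ∂x/∂θ(θ₀, p) · q̂(p) dμ(p), where q̂(p) = exp(x(θ₀, p)) / Z(θ₀). -/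

import Mathlib

/-!
By the chain rule it suffices to differentiate `Z θ = ∫ exp (x θ p) ∂μ` under the integral sign.
The domination hypothesis bounds the derivative `x' θ p * exp (x θ p)` for each `θ` only for
almost every `p`, whereas dominated differentiation needs, for almost every `p`, a Lipschitz bound
on `θ ↦ exp (x θ p)` over a whole interval. Fubini exchanges the two quantifiers once the
derivative is jointly measurable in `(θ, p)`; it is, being a limit of difference quotients that
are continuous in `θ` and measurable in `p` (Carathéodory). Integrating the almost-everywhere
bound on the derivative along an interval then gives the Lipschitz estimate.
-/

open MeasureTheory Real Filter Topology TopologicalSpace Set Function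
open scoped NNReal Interval

theorem MeasureTheory.Integrable.sigmaFinite_of_pos {P : Type*} [MeasurableSpace P]
    {μ : Measure P} {f : P → ℝ} (hf : Integrable f μ) (hpos : ∀ p, 0 < f p) :
    SigmaFinite μ := by
  have hfin := hf.aefinStronglyMeasurable
  have hmem : ∀ᵐ p ∂μ, p ∈ hfin.sigmaFiniteSet := by
    have h := hfin.ae_eq_zero_compl
    rw [EventuallyEq, ae_restrict_iff' hfin.measurableSet.compl] at h
    simpa [(hpos _).ne'] using h
  rw [← Measure.restrict_eq_self_of_ae_mem hmem]
  infer_instance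

theorem MeasureTheory.Measure.ae_ae_comm_of_nullMeasurableSet {ι α : Type*} [MeasurableSpace ι]
    [MeasurableSpace α] {ν : Measure ι} {μ : Measure α} [SFinite ν] [SFinite μ]
    {p : ι → α → Prop} (hp : NullMeasurableSet {z : ι × α | p z.1 z.2} (ν.prod μ))
    (h : ∀ᵐ i ∂ν, ∀ᵐ a ∂μ, p i a) : ∀ᵐ a ∂μ, ∀ᵐ i ∂ν, p i a := by
  set t := toMeasurable (ν.prod μ) {z : ι × α | p z.1 z.2}
  have ht : ∀ᵐ z ∂ν.prod μ, z ∈ t ↔ p z.1 z.2 :=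
    hp.toMeasurable_ae_eq.mono fun z hz => Iff.of_eq hz
  have ht_swap : ∀ᵐ a ∂μ, ∀ᵐ i ∂ν, (i, a) ∈ t ↔ p i a :=
    Measure.ae_ae_of_ae_prod (Measure.measurePreserving_swap.quasiMeasurePreserving.ae ht)
  have hmem : ∀ᵐ i ∂ν, ∀ᵐ a ∂μ, (i, a) ∈ t := by
    filter_upwards [h, Measure.ae_ae_of_ae_prod ht] with i hi hti
    filter_upwards [hi, hti] with a ha hta using hta.2 ha
  rw [Measure.ae_ae_comm (p := fun i a => (i, a) ∈ t) (measurableSet_toMeasurable _ _)] at hmem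
  filter_upwards [hmem, ht_swap] with a ha hta
  filter_upwards [ha, hta] with i hi hti using hti.1 hi

theorem aemeasurable_uncurry_of_continuousOn_of_aemeasurable {ι α β : Type*}
    [TopologicalSpace ι] [MetrizableSpace ι] [SecondCountableTopology ι] [MeasurableSpace ι]
    [OpensMeasurableSpace ι] [MeasurableSpace α] [TopologicalSpace β] [PseudoMetrizableSpace β]
    [MeasurableSpace β] [BorelSpace β] {ν : Measure ι} {μ : Measure α} {s : Set ι}
    (hs : IsOpen s) {u : ι → α → β} (hcont : ∀ᵐ a ∂μ, ContinuousOn (fun i => u i a) s)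
    (hmeas : ∀ i ∈ s, AEMeasurable (u i) μ) :
    AEMeasurable (uncurry u) ((ν.restrict s).prod μ) := by
  obtain rfl | ⟨i₀, hi₀⟩ := s.eq_empty_or_nonempty
  · simp
  have hw : ∀ i, ∃ w : α → β, Measurable w ∧ (i ∈ s → u i =ᵐ[μ] w) := fun i => by
    by_cases hi : i ∈ s
    · exact ⟨_, (hmeas i hi).measurable_mk, fun _ => (hmeas i hi).ae_eq_mk⟩
    · exact ⟨_, (hmeas i₀ hi₀).measurable_mk, fun h => absurd h hi⟩
  choose w hw_meas hw_eq using hw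
  -- `t n` approximates the identity of `ι` by finitely-valued measurable maps
  set t : ℕ → SimpleFunc ι ι := stronglyMeasurable_id.approx
  have ht (i : ι) : Tendsto (fun n => t n i) atTop (𝓝 i) := stronglyMeasurable_id.tendsto_approx i
  have hU (n : ℕ) : Measurable fun z : ι × α => w (t n z.1) z.2 := by
    have h : Measurable fun q : α × (t n).range => w q.2 q.1 :=
      measurable_from_prod_countable_left fun j => hw_meas j
    have hsub : Measurable fun z : ι × α => (⟨t n z.1, (t n).mem_range_self z.1⟩ : (t n).range) :=
      ((t n).measurable.comp measurable_fst).subtype_mk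
    exact h.comp (measurable_snd.prodMk hsub)
  have hgood : ∀ᵐ a ∂μ, ∀ n, ∀ j : (t n).range, (j : ι) ∈ s → u j a = w j a := by
    refine ae_all_iff.2 fun n => ae_all_iff.2 fun j => ?_
    by_cases hj : (j : ι) ∈ s
    · filter_upwards [hw_eq j hj] with a ha _ using ha
    · exact ae_of_all _ fun _ h => absurd h hj
  refine aemeasurable_of_tendsto_metrizable_ae atTop (fun n => (hU n).aemeasurable) ?_
  filter_upwards [Measure.quasiMeasurePreserving_fst.ae (ae_restrict_mem hs.measurableSet),
    Measure.quasiMeasurePreserving_snd.ae (hcont.and hgood)] with z hz ⟨hzc, hzw⟩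
  refine ((hzc.continuousAt (hs.mem_nhds hz)).tendsto.comp (ht z.1)).congr' ?_
  filter_upwards [(ht z.1).eventually (hs.mem_nhds hz)] with n hn
  exact hzw n ⟨_, (t n).mem_range_self z.1⟩ hn

theorem aemeasurable_uncurry_of_hasDerivAt {α : Type*} [MeasurableSpace α] {μ : Measure α}
    {ν : Measure ℝ} {F F' : ℝ → α → ℝ} {x₀ r : ℝ}
    (hF : ∀ θ ∈ Metric.ball x₀ r, AEMeasurable (F θ) μ)
    (hF' : ∀ᵐ a ∂μ, ∀ θ ∈ Metric.ball x₀ r, HasDerivAt (F · a) (F' θ a) θ) :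
    AEMeasurable (uncurry F') ((ν.restrict (Metric.ball x₀ (r / 2))).prod μ) := by
  rcases le_or_gt r 0 with hr | hr
  · simp [Metric.ball_eq_empty.2 (by linarith : r / 2 ≤ 0)]
  have hball : Metric.ball x₀ (r / 2) ⊆ Metric.ball x₀ r :=
    Metric.ball_subset_ball (by linarith)
  set h : ℕ → ℝ := fun n => r / 2 / (n + 1)
  have hh_tendsto : Tendsto h atTop (𝓝[>] 0) := by
    refine tendsto_nhdsWithin_iff.2 ⟨?_, Eventually.of_forall fun n => ?_⟩
    · exact tendsto_const_nhds.div_atTop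
        (tendsto_atTop_add_const_right _ _ tendsto_natCast_atTop_atTop)
    · exact mem_Ioi.2 (by positivity)
  have hh_mem (n : ℕ) (θ : ℝ) (hθ : θ ∈ Metric.ball x₀ (r / 2)) : θ + h n ∈ Metric.ball x₀ r := by
    have hh_le : h n ≤ r / 2 := div_le_self (by linarith) (by simp)
    have hh_pos : 0 < h n := by positivity
    rw [Metric.mem_ball, Real.dist_eq, abs_lt] at hθ ⊢
    constructor <;> linarith
  have hQ (n : ℕ) : AEMeasurable (uncurry fun θ a => (h n)⁻¹ • (F (θ + h n) a - F θ a))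
      ((ν.restrict (Metric.ball x₀ (r / 2))).prod μ) := by
    refine aemeasurable_uncurry_of_continuousOn_of_aemeasurable Metric.isOpen_ball ?_
      fun θ hθ => ((hF _ (hh_mem n θ hθ)).sub (hF θ (hball hθ))).const_smul (h n)⁻¹
    filter_upwards [hF'] with a ha θ hθ
    have hshift : ContinuousAt (fun θ => F (θ + h n) a) θ :=
      ContinuousAt.comp (f := fun θ => θ + h n) (ha _ (hh_mem n θ hθ)).continuousAt
        (continuousAt_id.add continuousAt_const)
    exact ((continuousAt_const (y := (h n)⁻¹)).smul
      (hshift.sub (ha θ (hball hθ)).continuousAt)).continuousWithinAt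
  refine aemeasurable_of_tendsto_metrizable_ae atTop hQ ?_
  filter_upwards [Measure.quasiMeasurePreserving_fst.ae (ae_restrict_mem measurableSet_ball),
    Measure.quasiMeasurePreserving_snd.ae hF'] with z hz hz'
  exact (hz' z.1 (hball hz)).tendsto_slope_zero_right.comp hh_tendsto

theorem lipschitzOnWith_of_hasDerivAt_of_ae_norm_le {E : Type*} [NormedAddCommGroup E]
    [NormedSpace ℝ E] [CompleteSpace E] {f f' : ℝ → E} {s : Set ℝ} {C : ℝ≥0}
    (hs : s.OrdConnected) (hf : ∀ x ∈ s, HasDerivAt f (f' x) x)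
    (hC : ∀ᵐ x ∂volume.restrict s, ‖f' x‖ ≤ C) : LipschitzOnWith C f s := by
  rw [lipschitzOnWith_iff_dist_le_mul]
  intro a ha b hb
  have hab : uIcc a b ⊆ s := hs.uIcc_subset ha hb
  have hC_ab : ∀ᵐ x ∂volume.restrict (Ι a b), ‖f' x‖ ≤ C :=
    ae_mono (Measure.restrict_mono (uIoc_subset_uIcc.trans hab) le_rfl) hC
  have hf'_meas : AEStronglyMeasurable f' (volume.restrict (Ι a b)) :=
    (aestronglyMeasurable_deriv f _).congr <| ae_restrict_of_forall_mem measurableSet_uIoc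
      fun x hx => (hf x (hab (uIoc_subset_uIcc hx))).deriv
  have hftc := intervalIntegral.integral_eq_sub_of_hasDerivAt (fun x hx => hf x (hab hx))
    (intervalIntegrable_const.mono_fun' hf'_meas hC_ab)
  calc dist (f a) (f b) = ‖∫ x in a..b, f' x‖ := by rw [hftc, dist_comm, dist_eq_norm]
    _ ≤ C * |b - a| := intervalIntegral.norm_integral_le_of_norm_le_const_ae
        ((ae_restrict_iff' measurableSet_uIoc).1 hC_ab)
    _ = C * dist a b := by rw [dist_comm, Real.dist_eq]

/-- **Gradient of the normalized log-likelihood.**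
With `Z θ = ∫ exp (x θ p) dμ p` and `L θ = x θ p⋆ - log (Z θ)`, under a
dominated-derivative hypothesis the log-likelihood is differentiable at `θ₀`
with derivative `∂x/∂θ(θ₀, p⋆) - ∫ ∂x/∂θ(θ₀, p) · q̂ p dμ p`, where
`q̂ p = exp (x θ₀ p) / Z θ₀`. -/
theorem grad_log_likelihood
    {P : Type*} [MeasurableSpace P] (μ : Measure P)
    (x x' : ℝ → P → ℝ) (pstar : P) (θ₀ ε : ℝ) (hε : 0 < ε)
    (hint : ∀ θ ∈ Metric.ball θ₀ ε, Integrable (fun p => Real.exp (x θ p)) μ)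
    (hderiv : ∀ᵐ p ∂μ, ∀ θ ∈ Metric.ball θ₀ ε,
      HasDerivAt (fun θ' => x θ' p) (x' θ p) θ)
    (g : P → ℝ) (hg : Integrable g μ)
    (hbound : ∀ θ ∈ Metric.ball θ₀ ε,
      ∀ᵐ p ∂μ, |x' θ p * Real.exp (x θ p)| ≤ g p)
    (hmeas : AEStronglyMeasurable (fun p => x' θ₀ p * Real.exp (x θ₀ p)) μ)
    (hZ : 0 < ∫ p, Real.exp (x θ₀ p) ∂μ)
    (hstar : HasDerivAt (fun θ => x θ pstar) (x' θ₀ pstar) θ₀) :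
    HasDerivAt (fun θ => x θ pstar - Real.log (∫ p, Real.exp (x θ p) ∂μ))
      (x' θ₀ pstar -
        ∫ p, x' θ₀ p * (Real.exp (x θ₀ p) / (∫ q, Real.exp (x θ₀ q) ∂μ)) ∂μ)
      θ₀ := by
  have := (hint θ₀ (Metric.mem_ball_self hε)).sigmaFinite_of_pos fun p => exp_pos (x θ₀ p)
  have hball : Metric.ball θ₀ (ε / 2) ⊆ Metric.ball θ₀ ε :=
    Metric.ball_subset_ball (by linarith)
  have hexp : ∀ᵐ p ∂μ, ∀ θ ∈ Metric.ball θ₀ ε,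
      HasDerivAt (fun θ => exp (x θ p)) (x' θ p * exp (x θ p)) θ := by
    filter_upwards [hderiv] with p hp θ hθ
    simpa only [mul_comm] using (hp θ hθ).exp
  have hbound_swap : ∀ᵐ p ∂μ, ∀ᵐ θ ∂volume.restrict (Metric.ball θ₀ (ε / 2)),
      |x' θ p * exp (x θ p)| ≤ g p := by
    refine Measure.ae_ae_comm_of_nullMeasurableSet (nullMeasurableSet_le ?_ ?_)
      (ae_restrict_of_forall_mem measurableSet_ball fun θ hθ => hbound θ (hball hθ))
    · exact (aemeasurable_uncurry_of_hasDerivAt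
        (fun θ hθ => (hint θ hθ).aemeasurable) hexp).abs
    · exact hg.aemeasurable.comp_quasiMeasurePreserving Measure.quasiMeasurePreserving_snd
  have hlip : ∀ᵐ p ∂μ, LipschitzOnWith (nnabs (g p)) (fun θ => exp (x θ p))
      (Metric.ball θ₀ (ε / 2)) := by
    filter_upwards [hexp, hbound_swap] with p hp hp_bound
    refine lipschitzOnWith_of_hasDerivAt_of_ae_norm_le (convex_ball θ₀ _).ordConnected
      (fun θ hθ => hp θ (hball hθ)) (hp_bound.mono fun θ hθ => ?_)
    simpa only [Real.norm_eq_abs, coe_nnabs] using hθ.trans (le_abs_self _)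
  obtain ⟨-, hZ_deriv⟩ := hasDerivAt_integral_of_dominated_loc_of_lip
    (Metric.ball_mem_nhds θ₀ (half_pos hε))
    (eventually_of_mem (Metric.ball_mem_nhds θ₀ hε) fun θ hθ => (hint θ hθ).aestronglyMeasurable)
    (hint θ₀ (Metric.mem_ball_self hε)) hmeas hlip hg
    (hexp.mono fun p hp => hp θ₀ (Metric.mem_ball_self hε))
  rw [integral_congr_ae (ae_of_all _ fun p => (mul_div_assoc _ _ _).symm), integral_div]
  exact hstar.sub (hZ_deriv.log hZ.ne')
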